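/- arXiv:2202.09060 — 2 statements merged into one kernel-verified Lean document; each statement's English description precedes it below -/
import Mathlib

section
/- Let N ≥ 2 and let W be the topology matrix of a directed star: W(i, 1) ≠ 0 for i = 2, …, N and all other entries of W are zero, and let Δ_2 = diag(1, 0, 1, …, 1) (all diagonal entries 1 except the second, which is 0). Assume: (i) all generalized left Jordan chains of e^{Ah} about 𝓗(h) have length 1, i.e. for every θ ∈ ℂ there exists no pair of row vectors ξ^1, ξ^2 ∈ ℂ^{1×n} with ξ^1 ≠ 0, ξ^1·(θI − e^{Ah}) = 0 and ξ^2·(θI − e^{Ah}) = ξ^1·𝓗(h); (ii) the pair (A, B) satisfies the PBH condition; (iii) h is non-pathological for A, i.e. there are no two complex eigenvalues λ_1, λ_2 of A and nonzero integer k with λ_1 − λ_2 = (2kπ/h)·i. Then the networked sampled-data system (Φ_s, Δ_2 ⊗ 𝓑(h)) is controllable. -/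
open Matrix
open scoped Kronecker

/-- Entrywise complexification of a real matrix. -/
noncomputable def cpx {a b : Type*} (M : Matrix a b ℝ) : Matrix a b ℂ :=
  M.map (Complex.ofReal)

/-- The matrix exponential `e^{M}`. -/
noncomputable def mexp {q : Type*} [Fintype q] [DecidableEq q]
    (M : Matrix q q ℝ) : Matrix q q ℝ :=
  NormedSpace.exp M

/-- The entrywise integral `∫₀ʰ e^{Aτ} dτ`. -/
noncomputable def intExp {q : Type*} [Fintype q] [DecidableEq q]
    (A : Matrix q q ℝ) (h : ℝ) : Matrix q q ℝ :=
  Matrix.of fun i j => ∫ τ in (0:ℝ)..h, (NormedSpace.exp (τ • A)) i j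

/-- `θ` is an eigenvalue of the complex square matrix `M`. -/
def IsEig {q : Type*} [Fintype q] [DecidableEq q] (M : Matrix q q ℂ) (θ : ℂ) : Prop :=
  (θ • (1 : Matrix q q ℂ) - M).det = 0

/-- PBH condition for a pair of complex matrices: for every `s ∈ ℂ`, the only row
vector `v` with `v (sI - M) = 0` and `v G = 0` is `v = 0`. -/
def PBH {q r : Type*} [Fintype q] [DecidableEq q] [Fintype r]
    (M : Matrix q q ℂ) (G : Matrix q r ℂ) : Prop :=
  ∀ (s : ℂ) (v : q → ℂ), v ᵥ* (s • (1 : Matrix q q ℂ) - M) = 0 → v ᵥ* G = 0 → v = 0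

/-- Controllability of a discrete-time linear system `x⁺ = F x + G u`:
every state can be steered to the origin in finitely many steps. -/
def Controllable {q r : Type*} [Fintype q] [DecidableEq q] [Fintype r]
    (F : Matrix q q ℝ) (G : Matrix q r ℝ) : Prop :=
  ∀ x : q → ℝ, ∃ (k : ℕ) (u : Fin k → r → ℝ),
    (F ^ k) *ᵥ x + ∑ j : Fin k, (F ^ (k - 1 - (j : ℕ))) *ᵥ (G *ᵥ u j) = 0

/-- `𝓑(h) = (∫₀ʰ e^{Aτ} dτ)·B`. -/
noncomputable def sampB {n p : ℕ} (A : Matrix (Fin n) (Fin n) ℝ)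
    (B : Matrix (Fin n) (Fin p) ℝ) (h : ℝ) : Matrix (Fin n) (Fin p) ℝ :=
  intExp A h * B

/-- `𝓗(h) = (∫₀ʰ e^{Aτ} dτ)·H·C`. -/
noncomputable def sampH {n m : ℕ} (A : Matrix (Fin n) (Fin n) ℝ)
    (H : Matrix (Fin n) (Fin m) ℝ) (C : Matrix (Fin m) (Fin n) ℝ) (h : ℝ) :
    Matrix (Fin n) (Fin n) ℝ :=
  intExp A h * H * C

/-- `Φ_s = I_N ⊗ e^{Ah} + W ⊗ 𝓗(h)`. -/
noncomputable def Phis {n m N : ℕ} (A : Matrix (Fin n) (Fin n) ℝ)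
    (H : Matrix (Fin n) (Fin m) ℝ) (C : Matrix (Fin m) (Fin n) ℝ)
    (W : Matrix (Fin N) (Fin N) ℝ) (h : ℝ) :
    Matrix (Fin N × Fin n) (Fin N × Fin n) ℝ :=
  (1 : Matrix (Fin N) (Fin N) ℝ) ⊗ₖ mexp (h • A) + W ⊗ₖ sampH A H C h

/-- `E_λ = e^{Ah} + λ·𝓗(h)` (complexified). -/
noncomputable def Emat {n m : ℕ} (A : Matrix (Fin n) (Fin n) ℝ)
    (H : Matrix (Fin n) (Fin m) ℝ) (C : Matrix (Fin m) (Fin n) ℝ)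
    (h : ℝ) (lam : ℂ) : Matrix (Fin n) (Fin n) ℂ :=
  cpx (mexp (h • A)) + lam • cpx (sampH A H C h)


section Aux
open NormedSpace Polynomial
attribute [local instance] Matrix.linftyOpNormedRing Matrix.linftyOpNormedAlgebra

variable {ι κ : Type*} [Fintype ι] [DecidableEq ι] [Fintype κ]

lemma cpx_mul {a b c : Type*} [Fintype b] (X : Matrix a b ℝ) (Y : Matrix b c ℝ) :
    cpx (X * Y) = cpx X * cpx Y :=
  Matrix.map_mul (f := Complex.ofRealHom)

lemma cpx_one : cpx (1 : Matrix ι ι ℝ) = 1 := by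
  ext i j; by_cases h : i = j <;> simp [cpx, Matrix.one_apply, h]

lemma cpx_pow (M : Matrix ι ι ℝ) (k : ℕ) : cpx (M ^ k) = cpx M ^ k := by
  induction k with
  | zero => simpa using cpx_one
  | succ k ih => rw [pow_succ, pow_succ, cpx_mul, ih]

lemma cpx_smul (c : ℝ) (M : Matrix ι ι ℝ) : cpx (c • M) = (c : ℂ) • cpx M := by
  ext i j; simp [cpx, Complex.ofReal_mul, Complex.real_smul]

lemma cpx_exp (M : Matrix ι ι ℝ) :
    cpx (NormedSpace.exp M) = NormedSpace.exp (cpx M) := by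
  have hc : Continuous fun X : Matrix ι ι ℝ => X.map (Complex.ofReal : ℝ → ℂ) :=
    continuous_id.matrix_map Complex.continuous_ofReal
  exact map_exp (Complex.ofRealHom.mapMatrix : Matrix ι ι ℝ →+* Matrix ι ι ℂ) hc M

lemma cpx_vecMul (y : ι → ℝ) (P : Matrix ι κ ℝ) :
    (fun i => (y i : ℂ)) ᵥ* cpx P = fun j => ((y ᵥ* P) j : ℂ) := by
  funext j
  simp [vecMul, dotProduct, cpx]

lemma vecMul_matSmul (c : ℂ) (M : Matrix ι κ ℂ) (v : ι → ℂ) :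
    v ᵥ* (c • M) = c • (v ᵥ* M) := by
  funext j
  simp [vecMul, dotProduct, Finset.mul_sum]
  exact Finset.sum_congr rfl fun i _ => by ring

noncomputable def vecMulLM (v : ι → ℂ) : Matrix ι ι ℂ →ₗ[ℝ] (ι → ℂ) where
  toFun M := v ᵥ* M
  map_add' M N := by
    ext j; simp [vecMul, dotProduct, mul_add, Finset.sum_add_distrib]
  map_smul' c M := by
    ext j
    simp only [vecMul, dotProduct, Matrix.smul_apply, Pi.smul_apply, RingHom.id_apply,
      Complex.real_smul, Finset.mul_sum]
    exact Finset.sum_congr rfl fun x _ => by ring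

lemma vecMulLM_apply (v : ι → ℂ) (M : Matrix ι ι ℂ) : vecMulLM v M = v ᵥ* M := rfl

lemma vecMul_exp (M : Matrix ι ι ℂ) (v : ι → ℂ) (lam : ℂ) (hv : v ᵥ* M = lam • v) :
    v ᵥ* NormedSpace.exp M = Complex.exp lam • v := by
  have hpow : ∀ k : ℕ, v ᵥ* (M ^ k) = (lam ^ k) • v := by
    intro k
    induction k with
    | zero => simp
    | succ k ih =>
        rw [pow_succ, ← Matrix.vecMul_vecMul, ih, Matrix.smul_vecMul, hv, pow_succ,
          smul_smul, mul_comm]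
  have h1 : HasSum (fun k : ℕ => ((Nat.factorial k : ℝ))⁻¹ • (v ᵥ* M ^ k))
      (v ᵥ* NormedSpace.exp M) := by
    have := (exp_series_hasSum_exp' (𝕂 := ℝ) M).mapL (vecMulLM v).toContinuousLinearMap
    simp [vecMulLM] at this
    exact this
  have h2 : HasSum (fun k : ℕ => (((Nat.factorial k : ℝ))⁻¹ • lam ^ k) • v)
      ((NormedSpace.exp lam) • v) :=
    (exp_series_hasSum_exp' (𝕂 := ℝ) lam).smul_const v
  have h3 : (fun k : ℕ => ((Nat.factorial k : ℝ))⁻¹ • (v ᵥ* M ^ k))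
      = fun k : ℕ => (((Nat.factorial k : ℝ))⁻¹ • lam ^ k) • v := by
    funext k; rw [hpow k, smul_assoc]
  rw [h3] at h1
  rw [h1.unique h2]
  congr 1
  rw [Complex.exp_eq_exp_ℂ]

lemma vecMul_cpx_mexp (A : Matrix ι ι ℝ) (t : ℝ) (v : ι → ℂ) (lam : ℂ)
    (hv : v ᵥ* cpx A = lam • v) :
    v ᵥ* cpx (mexp (t • A)) = Complex.exp (t * lam) • v := by
  rw [mexp, cpx_exp, cpx_smul]
  apply vecMul_exp
  rw [vecMul_matSmul, hv, smul_smul]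

lemma vecMul_cpx_intExp (A : Matrix ι ι ℝ) (h : ℝ) (v : ι → ℂ) (lam : ℂ)
    (hv : v ᵥ* cpx A = lam • v) :
    v ᵥ* cpx (intExp A h) = (∫ τ in (0:ℝ)..h, Complex.exp (τ * lam)) • v := by
  have hcontA : Continuous fun τ : ℝ => NormedSpace.exp (τ • A) :=
    exp_continuous.comp (continuous_id.smul continuous_const)
  funext j
  have hint : ∀ i ∈ Finset.univ (α := ι), IntervalIntegrable
      (fun τ : ℝ => (v i) * ((NormedSpace.exp (τ • A)) i j : ℂ))
      MeasureTheory.volume 0 h := by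
    intro i _
    apply Continuous.intervalIntegrable
    exact continuous_const.mul (Complex.continuous_ofReal.comp (hcontA.matrix_elem i j))
  have keyτ : ∀ τ : ℝ, (∑ i, v i * ((NormedSpace.exp (τ • A)) i j : ℂ)) =
      Complex.exp (↑τ * lam) * v j := by
    intro τ
    have h2 : v ᵥ* cpx (mexp (τ • A)) = Complex.exp (↑τ * lam) • v :=
      vecMul_cpx_mexp A τ v lam hv
    have := congrFun h2 j
    simpa [vecMul, dotProduct, cpx, mexp] using this
  calc (v ᵥ* cpx (intExp A h)) j
      = ∑ i, v i * ((∫ τ in (0:ℝ)..h, (NormedSpace.exp (τ • A)) i j : ℝ) : ℂ) := by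
        simp [vecMul, dotProduct, cpx, intExp]
    _ = ∑ i, ∫ τ in (0:ℝ)..h, v i * ((NormedSpace.exp (τ • A)) i j : ℂ) := by
        refine Finset.sum_congr rfl fun i _ => ?_
        rw [← intervalIntegral.integral_ofReal, intervalIntegral.integral_const_mul]
    _ = ∫ τ in (0:ℝ)..h, ∑ i, v i * ((NormedSpace.exp (τ • A)) i j : ℂ) :=
        (intervalIntegral.integral_finset_sum hint).symm
    _ = ∫ τ in (0:ℝ)..h, Complex.exp (↑τ * lam) * v j :=
        intervalIntegral.integral_congr fun τ _ => keyτ τ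
    _ = (∫ τ in (0:ℝ)..h, Complex.exp (↑τ * lam)) * v j := by
        rw [intervalIntegral.integral_mul_const]
    _ = ((∫ τ in (0:ℝ)..h, Complex.exp (↑τ * lam)) • v) j := by simp

lemma isEig_of_vecMul (M : Matrix ι ι ℂ) (lam : ℂ) (v : ι → ℂ) (hv : v ≠ 0)
    (h : v ᵥ* M = lam • v) : IsEig M lam := by
  rw [IsEig, ← Matrix.det_transpose, ← Matrix.exists_mulVec_eq_zero_iff]
  refine ⟨v, hv, ?_⟩
  rw [Matrix.mulVec_transpose, Matrix.vecMul_sub, vecMul_matSmul, Matrix.vecMul_one, h]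
  simp

lemma isEig_conj (A : Matrix ι ι ℝ) (lam : ℂ) (hl : IsEig (cpx A) lam) :
    IsEig (cpx A) ((starRingEnd ℂ) lam) := by
  rw [IsEig] at hl ⊢
  have heq : ((starRingEnd ℂ) lam) • (1 : Matrix ι ι ℂ) - cpx A
      = (starRingEnd ℂ).mapMatrix (lam • (1 : Matrix ι ι ℂ) - cpx A) := by
    ext i j
    by_cases hij : i = j <;>
      simp [Matrix.one_apply, hij, cpx, Complex.conj_ofReal]
  rw [heq, ← RingHom.map_det, hl, map_zero]

lemma integral_exp_ne_zero (A : Matrix ι ι ℝ) (h : ℝ) (hh : 0 < h) (lam : ℂ)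
    (hEig : IsEig (cpx A) lam)
    (hpath : ¬ ∃ (l1 l2 : ℂ) (k : ℤ), IsEig (cpx A) l1 ∧ IsEig (cpx A) l2 ∧ k ≠ 0 ∧
      l1 - l2 = (2 * (k : ℂ) * (Real.pi : ℂ) / (h : ℂ)) * Complex.I) :
    (∫ τ in (0:ℝ)..h, Complex.exp (τ * lam)) ≠ 0 := by
  by_cases hlam : lam = 0
  · simp [hlam, hh.ne']
  · have hhne : (h : ℂ) ≠ 0 := Complex.ofReal_ne_zero.mpr hh.ne'
    have hrw : (∫ τ in (0:ℝ)..h, Complex.exp (τ * lam))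
        = (Complex.exp (lam * (h:ℂ)) - Complex.exp (lam * ((0:ℝ):ℂ))) / lam := by
      rw [← integral_exp_mul_complex hlam]
      exact intervalIntegral.integral_congr fun τ _ => by rw [mul_comm]
    rw [hrw]
    intro hzero
    rw [_root_.div_eq_zero_iff] at hzero
    rcases hzero with hzero | h0
    · rw [sub_eq_zero] at hzero
      have h1 : Complex.exp (lam * (h:ℂ)) = 1 := by
        rw [hzero]; norm_num
      rw [Complex.exp_eq_one_iff] at h1
      obtain ⟨n, hn⟩ := h1
      have hn0 : n ≠ 0 := by
        rintro rfl
        simp only [Int.cast_zero, zero_mul] at hn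
        rcases mul_eq_zero.mp hn with hx | hx
        · exact hlam hx
        · exact hhne hx
      have hlameq : lam = 2 * (n : ℂ) * (Real.pi : ℂ) / (h : ℂ) * Complex.I := by
        have hd : lam = ((n:ℂ) * (2 * (Real.pi:ℂ) * Complex.I)) / (h:ℂ) := by
          rw [eq_div_iff hhne]
          exact hn
        rw [hd]; ring
      have hr : (2 * (n : ℂ) * (Real.pi : ℂ) / (h : ℂ))
          = ((2 * (n:ℝ) * Real.pi / h : ℝ) : ℂ) := by push_cast; ring
      have hconj : (starRingEnd ℂ) lam = -lam := by
        rw [hlameq, hr, _root_.map_mul, Complex.conj_ofReal, Complex.conj_I]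
        ring
      apply hpath
      refine ⟨lam, (starRingEnd ℂ) lam, 2 * n, hEig, isEig_conj A lam hEig, by
        simpa using hn0, ?_⟩
      rw [hconj, hlameq]
      push_cast
      ring
    · exact hlam h0

set_option maxHeartbeats 2000000 in
lemma eig_lift (A : Matrix ι ι ℝ) (h : ℝ) (hh : 0 < h)
    (hpath : ¬ ∃ (l1 l2 : ℂ) (k : ℤ), IsEig (cpx A) l1 ∧ IsEig (cpx A) l2 ∧ k ≠ 0 ∧
      l1 - l2 = (2 * (k : ℂ) * (Real.pi : ℂ) / (h : ℂ)) * Complex.I)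
    (θ : ℂ) (v : ι → ℂ) (hv : v ≠ 0)
    (hvΦ : v ᵥ* cpx (mexp (h • A)) = θ • v) :
    ∃ lam : ℂ, v ᵥ* cpx A = lam • v := by
  classical
  set Ac := cpx A with hAc
  set Φc := cpx (mexp (h • A)) with hΦc
  have hhc : (h : ℂ) ≠ 0 := Complex.ofReal_ne_zero.mpr hh.ne'
  -- commutation
  have hcommR : A * mexp (h • A) = mexp (h • A) * A := by
    have : Commute A (NormedSpace.exp (h • A)) :=
      Commute.exp_right ((Commute.refl A).smul_right h)
    exact this
  have hcomm : Ac * Φc = Φc * Ac := by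
    rw [hAc, hΦc, ← cpx_mul, ← cpx_mul, hcommR]
  -- the subspace V
  set T : (ι → ℂ) →ₗ[ℂ] (ι → ℂ) := Matrix.vecMulLinear Φc - θ • LinearMap.id with hT
  set V : Submodule ℂ (ι → ℂ) := LinearMap.ker T with hV
  have hmem : ∀ w : ι → ℂ, w ∈ V ↔ w ᵥ* Φc = θ • w := by
    intro w
    simp [hV, hT, LinearMap.mem_ker, sub_eq_zero, LinearMap.sub_apply]
  have hVinv : ∀ w ∈ V, w ᵥ* Ac ∈ V := by
    intro w hw
    rw [hmem] at hw ⊢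
    rw [Matrix.vecMul_vecMul, hcomm, ← Matrix.vecMul_vecMul, hw, Matrix.smul_vecMul]
  set g : Module.End ℂ (ι → ℂ) := Matrix.vecMulLinear Ac with hg
  have hginv : ∀ x ∈ V, g x ∈ V := by
    intro x hx; simpa [hg] using hVinv x hx
  set f : Module.End ℂ V := g.restrict hginv with hf
  have hvV : v ∈ V := (hmem v).mpr hvΦ
  haveI : Nontrivial V := by
    refine ⟨⟨⟨v, hvV⟩, 0, ?_⟩⟩
    intro hEq
    exact hv (congrArg Subtype.val hEq)
  -- eigenvalues of f
  have heigA : ∀ (μ : ℂ) (w : V), (w : ι → ℂ) ≠ 0 → f w = μ • w →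
      (w : ι → ℂ) ᵥ* Ac = μ • (w : ι → ℂ) ∧ Complex.exp (h * μ) = θ := by
    intro μ w hwne hfw
    have hval : (w : ι → ℂ) ᵥ* Ac = μ • (w : ι → ℂ) := by
      have := congrArg Subtype.val hfw
      rw [hf] at this
      rw [LinearMap.restrict_coe_apply] at this
      simpa [hg] using this
    refine ⟨hval, ?_⟩
    have h1 : (w : ι → ℂ) ᵥ* Φc = Complex.exp (h * μ) • (w : ι → ℂ) := by
      rw [hΦc]; exact vecMul_cpx_mexp A h w μ hval
    have h2 : (w : ι → ℂ) ᵥ* Φc = θ • (w : ι → ℂ) := (hmem w).mp w.2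
    have h3 : (Complex.exp (h * μ) - θ) • (w : ι → ℂ) = 0 := by
      rw [sub_smul, h1.symm.trans h2]; simp
    rcases smul_eq_zero.mp h3 with h4 | h4
    · exact sub_eq_zero.mp h4
    · exact absurd h4 hwne
  have heig : ∀ μ : ℂ, f.HasEigenvalue μ →
      Complex.exp (h * μ) = θ ∧ IsEig Ac μ := by
    intro μ hμ
    obtain ⟨w, hw⟩ := hμ.exists_hasEigenvector
    have hwne : (w : ι → ℂ) ≠ 0 := fun h0 => hw.right (Subtype.ext h0)
    obtain ⟨hval, hexp⟩ := heigA μ w hwne hw.apply_eq_smul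
    exact ⟨hexp, isEig_of_vecMul Ac μ w hwne hval⟩
  obtain ⟨lam, hlamEig⟩ := Module.End.exists_eigenvalue f
  have huniq : ∀ μ : ℂ, f.HasEigenvalue μ → μ = lam := by
    intro μ hμ
    have e1 := (heig μ hμ)
    have e2 := (heig lam hlamEig)
    have hee : Complex.exp (h * μ) = Complex.exp (h * lam) := e1.1.trans e2.1.symm
    rw [Complex.exp_eq_exp_iff_exists_int] at hee
    obtain ⟨n, hn⟩ := hee
    by_cases hn0 : n = 0
    · rw [hn0] at hn
      simp only [Int.cast_zero, zero_mul, add_zero] at hn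
      exact mul_left_cancel₀ hhc hn
    · exfalso
      apply hpath
      refine ⟨μ, lam, n, e1.2, e2.2, hn0, ?_⟩
      have hthis : (h:ℂ) * μ - h * lam = n * (2 * Real.pi * Complex.I) := by rw [hn]; ring
      field_simp
      linear_combination hthis
  -- minpoly is a power of (X - lam)
  set P : Polynomial ℂ := minpoly ℂ f with hP
  have hPmonic : P.Monic := minpoly.monic (LinearMap.isIntegral f)
  have hsplits : P.Splits := IsAlgClosed.splits P
  have hroots : P.roots = Multiset.replicate P.natDegree lam := by
    apply Multiset.eq_replicate.mpr
    constructor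
    · exact Polynomial.splits_iff_card_roots.mp hsplits
    · intro a ha
      have hroot : P.IsRoot a := (Polynomial.mem_roots hPmonic.ne_zero).mp ha
      exact huniq a ((Module.End.hasEigenvalue_iff_isRoot).mpr hroot)
  have hPfact : P = (Polynomial.X - Polynomial.C lam) ^ P.natDegree := by
    have hfact := hsplits.eq_prod_roots_of_monic hPmonic
    rw [hroots, Multiset.map_replicate, Multiset.prod_replicate] at hfact
    exact hfact
  set d : ℕ := P.natDegree with hd
  have haeval : (f - algebraMap ℂ (Module.End ℂ V) lam) ^ d = 0 := by
    have h0 := minpoly.aeval ℂ f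
    rw [← hP, hPfact, map_pow, map_sub, Polynomial.aeval_X, Polynomial.aeval_C] at h0
    exact h0
  -- transfer to matrix powers
  set Nm : Matrix ι ι ℂ := Ac - lam • (1 : Matrix ι ι ℂ) with hNm
  have hcoe : ∀ (k : ℕ) (w : V),
      ((((f - algebraMap ℂ (Module.End ℂ V) lam) ^ k) w : V) : ι → ℂ)
        = (w : ι → ℂ) ᵥ* (Nm ^ k) := by
    intro k
    induction k with
    | zero => intro w; simp
    | succ k ih =>
        intro w
        rw [pow_succ']
        have hco : ∀ u : V, (((f - algebraMap ℂ (Module.End ℂ V) lam) u : V) : ι → ℂ)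
            = (u : ι → ℂ) ᵥ* Nm := by
          intro u
          have h1 : ((f u : V) : ι → ℂ) = (u : ι → ℂ) ᵥ* Ac := by
            rw [hf, LinearMap.restrict_coe_apply]; simp [hg]
          simp only [LinearMap.sub_apply, Module.algebraMap_end_apply,
            Submodule.coe_sub, Submodule.coe_smul, h1, hNm]
          rw [Matrix.vecMul_sub, vecMul_matSmul, Matrix.vecMul_one]
        rw [Module.End.mul_apply, hco, ih w, Matrix.vecMul_vecMul, ← pow_succ]
  have hnil : ∀ w ∈ V, w ᵥ* (Nm ^ d) = 0 := by
    intro w hw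
    have := hcoe d ⟨w, hw⟩
    rw [haeval] at this
    simpa using this.symm
  -- the subspace is invariant under Nm
  have hNminv : ∀ w ∈ V, w ᵥ* Nm ∈ V := by
    intro w hw
    rw [hNm, Matrix.vecMul_sub, vecMul_matSmul, Matrix.vecMul_one]
    exact V.sub_mem (hVinv w hw) (V.smul_mem lam hw)
  have hNmpow : ∀ (k : ℕ) (w : ι → ℂ), w ∈ V → w ᵥ* (Nm ^ k) ∈ V := by
    intro k
    induction k with
    | zero => intro w hw; simpa using hw
    | succ k ih =>
        intro w hw
        rw [pow_succ, ← Matrix.vecMul_vecMul]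
        exact hNminv _ (ih w hw)
  -- θ = exp(h lam) and exp identity on V
  have hθ : θ = Complex.exp (h * lam) := ((heig lam hlamEig).1).symm
  have hΦdecomp : Φc = (Complex.exp (h * lam) • (1 : Matrix ι ι ℂ))
      * NormedSpace.exp ((h:ℂ) • Nm) := by
    have h1 : Φc = NormedSpace.exp ((h:ℂ) • Ac) := by
      rw [hΦc, mexp, cpx_exp, cpx_smul]
    have hcommute : Commute (((h:ℂ) * lam) • (1 : Matrix ι ι ℂ)) ((h:ℂ) • Nm) := by
      simp only [Commute, SemiconjBy, smul_mul_assoc, mul_smul_comm, one_mul, mul_one]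
      exact smul_comm _ _ _
    have hsum : (h:ℂ) • Ac = ((h:ℂ) * lam) • (1 : Matrix ι ι ℂ) + (h:ℂ) • Nm := by
      rw [hNm, smul_sub, smul_smul]
      abel
    rw [h1, hsum, Matrix.exp_add_of_commute _ _ hcommute]
    congr 1
    have halg : ((h:ℂ) * lam) • (1 : Matrix ι ι ℂ)
        = algebraMap ℂ (Matrix ι ι ℂ) ((h:ℂ) * lam) :=
      (Algebra.algebraMap_eq_smul_one _).symm
    rw [halg]
    have hm := (map_exp (algebraMap ℂ (Matrix ι ι ℂ)) (continuous_algebraMap ℂ _)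
      ((h:ℂ) * lam)).symm
    rw [Algebra.algebraMap_eq_smul_one (A := Matrix ι ι ℂ) (NormedSpace.exp ((h:ℂ) * lam))] at hm
    rw [Complex.exp_eq_exp_ℂ]
    exact hm
  have hexpV : ∀ w ∈ V, w ᵥ* NormedSpace.exp ((h:ℂ) • Nm) = w := by
    intro w hw
    have h2 := (hmem w).mp hw
    rw [hΦdecomp, ← Matrix.vecMul_vecMul, vecMul_matSmul, Matrix.vecMul_one,
      Matrix.smul_vecMul, hθ] at h2
    exact smul_right_injective (ι → ℂ) (Complex.exp_ne_zero ((h:ℂ) * lam)) h2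
  -- descending induction step
  have hstep : ∀ j : ℕ, 1 ≤ j → (∀ w ∈ V, w ᵥ* Nm ^ (j+1) = 0) →
      ∀ w ∈ V, w ᵥ* Nm ^ j = 0 := by
    intro j hj hind w hw
    set w' : ι → ℂ := w ᵥ* Nm ^ (j-1) with hw'
    have hw'V : w' ∈ V := hNmpow (j-1) w hw
    set a : ι → ℂ := w ᵥ* Nm ^ j with ha
    have hterm : ∀ k : ℕ, ((Nat.factorial k : ℝ))⁻¹ • (w' ᵥ* ((h:ℂ) • Nm) ^ k)
        = (if k = 0 then w' else 0) + (if k = 1 then (h:ℂ) • a else 0) := by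
      intro k
      have hbase : w' ᵥ* ((h:ℂ) • Nm) ^ k = (h:ℂ)^k • (w ᵥ* Nm ^ ((j-1)+k)) := by
        rw [_root_.smul_pow, vecMul_matSmul, hw', Matrix.vecMul_vecMul, ← pow_add]
      match k with
      | 0 => simp [hbase]
      | 1 => 
        rw [hbase]
        have : j - 1 + 1 = j := Nat.succ_pred_eq_of_pos hj
        simp [this, ha]
      | (k+2) =>
        have hz : w ᵥ* Nm ^ ((j-1)+(k+2)) = 0 := by
          have hsplit : (j-1)+(k+2) = (j+1) + (k + 1 - 1) := by omega
          rw [hsplit, pow_add, ← Matrix.vecMul_vecMul, hind w hw, Matrix.zero_vecMul]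
        rw [hbase, hz]
        simp
    have hs1 : HasSum (fun k : ℕ => ((Nat.factorial k : ℝ))⁻¹ • (w' ᵥ* ((h:ℂ) • Nm) ^ k))
        (w' ᵥ* NormedSpace.exp ((h:ℂ) • Nm)) := by
      have := (exp_series_hasSum_exp' (𝕂 := ℝ) ((h:ℂ) • Nm)).mapL
        (vecMulLM w').toContinuousLinearMap
      simp [vecMulLM_apply] at this
      exact this
    have hs2 : HasSum (fun k : ℕ => (if k = 0 then w' else 0) + (if k = 1 then (h:ℂ) • a else 0))
        (w' + (h:ℂ) • a) := by
      exact (hasSum_ite_eq 0 w').add (hasSum_ite_eq 1 ((h:ℂ) • a))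
    rw [funext hterm] at hs1
    have hkey : w' + (h:ℂ) • a = w' := by
      rw [← hs1.unique hs2, hexpV w' hw'V]
    have : (h:ℂ) • a = 0 := by
      have := congrArg (fun z => z - w') hkey
      simpa [add_sub_cancel_left] using this
    rcases smul_eq_zero.mp this with hc | hc
    · exact absurd hc hhc
    · exact hc
  -- full descending induction
  have hdesc : ∀ t j : ℕ, 1 ≤ j → d ≤ j + t → ∀ w ∈ V, w ᵥ* Nm ^ j = 0 := by
    intro t
    induction t with
    | zero =>
        intro j hj hdj w hw
        have : j = d + (j - d) := by omega
        rw [this, pow_add, ← Matrix.vecMul_vecMul, hnil w hw, Matrix.zero_vecMul]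
    | succ t ih =>
        intro j hj hdj w hw
        by_cases hle : d ≤ j + t
        · exact ih j hj hle w hw
        · exact hstep j hj (fun u hu => ih (j+1) (by omega) (by omega) u hu) w hw
  have hfin : v ᵥ* Nm = 0 := by
    have := hdesc d 1 le_rfl (by omega) v hvV
    simpa using this
  refine ⟨lam, ?_⟩
  rw [hNm, Matrix.vecMul_sub, vecMul_matSmul, Matrix.vecMul_one] at hfin
  exact sub_eq_zero.mp hfin

/-- In a nonzero invariant subspace over ℂ there is a left eigenvector. -/
lemma exists_left_eig {ι : Type*} [Fintype ι] [DecidableEq ι]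
    (M : Matrix ι ι ℂ) (Y : Submodule ℂ (ι → ℂ))
    (hinv : ∀ w ∈ Y, w ᵥ* M ∈ Y) (hne : Y ≠ ⊥) :
    ∃ (s : ℂ) (w : ι → ℂ), w ∈ Y ∧ w ≠ 0 ∧ w ᵥ* M = s • w := by
  haveI : Nontrivial Y := Submodule.nontrivial_iff_ne_bot.mpr hne
  set g : Module.End ℂ (ι → ℂ) := Matrix.vecMulLinear M with hg
  have hginv : ∀ x ∈ Y, g x ∈ Y := fun x hx => by simpa [hg] using hinv x hx
  set f : Module.End ℂ Y := g.restrict hginv with hf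
  obtain ⟨s, hs⟩ := Module.End.exists_eigenvalue f
  obtain ⟨w, hw⟩ := hs.exists_hasEigenvector
  refine ⟨s, (w : ι → ℂ), w.2, fun h0 => hw.right (Subtype.ext h0), ?_⟩
  have := congrArg Subtype.val hw.apply_eq_smul
  rw [hf, LinearMap.restrict_coe_apply] at this
  simpa [hg] using this

lemma controllable_of_cpxPBH {q r : Type*} [Fintype q] [DecidableEq q]
    [Fintype r] [DecidableEq r]
    (F : Matrix q q ℝ) (G : Matrix q r ℝ) (hPBH : PBH (cpx F) (cpx G)) :
    Controllable F G := by
  classical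
  set L : (k : ℕ) → ((Fin k → r → ℝ) →ₗ[ℝ] (q → ℝ)) :=
    fun k => ∑ j : Fin k, (Matrix.mulVecLin (F ^ (k - 1 - (j:ℕ)) * G)).comp
      (LinearMap.proj j) with hL
  have hLapp : ∀ (k : ℕ) (u : Fin k → r → ℝ),
      L k u = ∑ j : Fin k, (F ^ (k - 1 - (j:ℕ))) *ᵥ (G *ᵥ u j) := by
    intro k u
    rw [hL]
    simp [LinearMap.sum_apply, Matrix.mulVecLin_apply, Matrix.mulVec_mulVec]
  set R : ℕ → Submodule ℝ (q → ℝ) := fun k => LinearMap.range (L k) with hR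
  have hmono : Monotone R := by
    apply monotone_nat_of_le_succ
    intro k
    rintro x ⟨u, rfl⟩
    refine ⟨Fin.cons 0 u, ?_⟩
    rw [hLapp, hLapp, Fin.sum_univ_succ]
    simp only [Fin.cons_zero, Fin.cons_succ, Matrix.mulVec_zero, zero_add]
    refine Finset.sum_congr rfl fun j _ => ?_
    rw [show k + 1 - 1 - ((j.succ : Fin (k+1)) : ℕ) = k - 1 - (j : ℕ) by
      simp only [Fin.val_succ]; omega]
  have hgen : ∀ (m : ℕ) (u : r → ℝ), (F ^ m) *ᵥ (G *ᵥ u) ∈ R (m + 1) := by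
    intro m u
    refine ⟨Fin.cons u 0, ?_⟩
    rw [hLapp, Fin.sum_univ_succ]
    simp only [Fin.cons_zero, Fin.cons_succ, Pi.zero_apply, Matrix.mulVec_zero, add_zero]
    rw [show m + 1 - 1 - (((0 : Fin (m+1))) : ℕ) = m by simp]
    simp
  -- the union of ranges is everything
  have htop : (⨆ k, R k) = ⊤ := by
    by_contra hne
    have hlt : (⨆ k, R k) < ⊤ := lt_top_iff_ne_top.mpr hne
    obtain ⟨φ, hφ0, hφbot⟩ := Submodule.exists_dual_map_eq_bot_of_lt_top hlt inferInstance
    set y : q → ℝ := fun j => φ (Pi.single j 1) with hy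
    have hφeq : ∀ x : q → ℝ, φ x = ∑ j, x j * y j := by
      have hsingle : ∀ j : q, (fun k => if j = k then (1:ℝ) else 0) = Pi.single j 1 := by
        intro j; funext k; simp [Pi.single_apply, eq_comm]
      intro x
      conv_lhs => rw [pi_eq_sum_univ x]
      rw [map_sum]
      refine Finset.sum_congr rfl fun j _ => ?_
      rw [_root_.map_smul, hsingle j]
      simp [hy, smul_eq_mul]
    have hyne : y ≠ 0 := by
      intro h0
      apply hφ0
      refine LinearMap.ext fun z => ?_
      rw [hφeq z, h0]
      simp
    have hvanish : ∀ (m : ℕ) (u : r → ℝ), φ ((F ^ m) *ᵥ (G *ᵥ u)) = 0 := by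
      intro m u
      have hmem : (F ^ m) *ᵥ (G *ᵥ u) ∈ ⨆ k, R k :=
        le_iSup R (m+1) (hgen m u)
      have : φ ((F ^ m) *ᵥ (G *ᵥ u)) ∈ (⨆ k, R k).map φ :=
        Submodule.mem_map_of_mem hmem
      rw [hφbot] at this
      simpa using this
    have hrow : ∀ m : ℕ, y ᵥ* (F ^ m * G) = 0 := by
      intro m
      funext t
      have h1 := hvanish m (Pi.single t 1)
      rw [Matrix.mulVec_mulVec, hφeq] at h1
      simpa [Matrix.vecMul, Matrix.mulVec, dotProduct, Pi.single_apply, mul_comm,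
        Matrix.mulVec_mulVec] using h1
    set yc : q → ℂ := fun j => (y j : ℂ) with hyc
    have hycne : yc ≠ 0 := by
      intro h0
      apply hyne
      funext j
      have h2 : (y j : ℂ) = 0 := by simpa [hyc] using congrFun h0 j
      exact_mod_cast h2
    have hrowc : ∀ m : ℕ, yc ᵥ* cpx (F ^ m * G) = 0 := by
      intro m
      have hcv := cpx_vecMul y (F ^ m * G)
      rw [hrow m] at hcv
      rw [hyc]
      rw [hcv]
      funext t
      simp
    set Y : Submodule ℂ (q → ℂ) :=
      Submodule.span ℂ (Set.range fun k : ℕ => yc ᵥ* (cpx F ^ k)) with hY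
    have hYinv : ∀ w ∈ Y, w ᵥ* cpx F ∈ Y := by
      intro w hw
      refine Submodule.span_induction ?_ ?_ ?_ ?_ hw
      · rintro _ ⟨k, rfl⟩
        apply Submodule.subset_span
        exact ⟨k + 1, by rw [Matrix.vecMul_vecMul, ← pow_succ]⟩
      · simp
      · intro a b _ _ ha hb
        rw [Matrix.add_vecMul]
        exact Y.add_mem ha hb
      · intro c a _ ha
        rw [Matrix.smul_vecMul]
        exact Y.smul_mem c ha
    have hycY : yc ∈ Y := by
      apply Submodule.subset_span
      exact ⟨0, by simp⟩
    have hYne : Y ≠ ⊥ := by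
      intro h0
      rw [h0, Submodule.mem_bot] at hycY
      exact hycne hycY
    have hYG : ∀ w ∈ Y, w ᵥ* cpx G = 0 := by
      intro w hw
      have hle : Y ≤ LinearMap.ker (Matrix.vecMulLinear (cpx G)) := by
        rw [hY, Submodule.span_le]
        rintro _ ⟨k, rfl⟩
        simp only [SetLike.mem_coe, LinearMap.mem_ker, Matrix.vecMulLinear_apply]
        rw [Matrix.vecMul_vecMul, ← cpx_pow, ← cpx_mul]
        exact hrowc k
      simpa using hle hw
    obtain ⟨s, w, hwY, hwne, hws⟩ := exists_left_eig (cpx F) Y hYinv hYne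
    apply hwne
    refine hPBH s w ?_ (hYG w hwY)
    rw [Matrix.vecMul_sub, vecMul_matSmul, Matrix.vecMul_one, hws]
    simp
  -- stabilization
  obtain ⟨k0, hk0⟩ := monotone_stabilizes_iff_noetherian.mpr inferInstance ⟨R, hmono⟩
  have hRtop : R k0 = ⊤ := by
    rw [← top_le_iff, ← htop]
    apply iSup_le
    intro k
    rcases le_total k k0 with hk | hk
    · exact hmono hk
    · exact le_of_eq (hk0 k hk).symm
  intro x
  have hmem : -(F ^ k0 *ᵥ x) ∈ R k0 := by rw [hRtop]; exact Submodule.mem_top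
  obtain ⟨u, hu⟩ := hmem
  refine ⟨k0, u, ?_⟩
  rw [← hLapp, hu]
  simp

lemma vecMul_from_pbhhyp {ι : Type*} [Fintype ι] [DecidableEq ι]
    (M : Matrix ι ι ℂ) (s : ℂ) (v : ι → ℂ)
    (h : v ᵥ* (s • (1 : Matrix ι ι ℂ) - M) = 0) : v ᵥ* M = s • v := by
  rw [Matrix.vecMul_sub, vecMul_matSmul, Matrix.vecMul_one, sub_eq_zero] at h
  exact h.symm

lemma pbhhyp_of_vecMul {ι : Type*} [Fintype ι] [DecidableEq ι]
    (M : Matrix ι ι ℂ) (s : ℂ) (v : ι → ℂ)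
    (h : v ᵥ* M = s • v) : v ᵥ* (s • (1 : Matrix ι ι ℂ) - M) = 0 := by
  rw [Matrix.vecMul_sub, vecMul_matSmul, Matrix.vecMul_one, h, sub_self]

lemma pbh_sampled {n p : ℕ}
    (A : Matrix (Fin n) (Fin n) ℝ) (B : Matrix (Fin n) (Fin p) ℝ)
    (h : ℝ) (hh : 0 < h)
    (hAB : PBH (cpx A) (cpx B))
    (hpath : ¬ ∃ (l1 l2 : ℂ) (k : ℤ), IsEig (cpx A) l1 ∧ IsEig (cpx A) l2 ∧ k ≠ 0 ∧
      l1 - l2 = (2 * (k : ℂ) * (Real.pi : ℂ) / (h : ℂ)) * Complex.I) :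
    PBH (cpx (mexp (h • A))) (cpx (sampB A B h)) := by
  intro θ v h1 h2
  by_contra hv
  have hΦ : v ᵥ* cpx (mexp (h • A)) = θ • v := vecMul_from_pbhhyp _ θ v h1
  obtain ⟨lam, hlam⟩ := eig_lift A h hh hpath θ v hv hΦ
  have hEig : IsEig (cpx A) lam := isEig_of_vecMul _ _ _ hv hlam
  have hc := integral_exp_ne_zero A h hh lam hEig hpath
  have h3 : v ᵥ* cpx (sampB A B h)
      = (∫ τ in (0:ℝ)..h, Complex.exp (τ * lam)) • (v ᵥ* cpx B) := by
    rw [sampB, cpx_mul, ← Matrix.vecMul_vecMul, vecMul_cpx_intExp A h v lam hlam,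
      Matrix.smul_vecMul]
  rw [h3] at h2
  have hvB : v ᵥ* cpx B = 0 := by
    rcases smul_eq_zero.mp h2 with hc' | hc'
    · exact absurd hc' hc
    · exact hc'
  exact hv (hAB lam v (pbhhyp_of_vecMul _ lam v hlam) hvB)

lemma cpx_add {a b : Type*} (X Y : Matrix a b ℝ) : cpx (X + Y) = cpx X + cpx Y := by
  ext i j; simp [cpx]

lemma cpx_kron {a b c d : Type*} (X : Matrix a b ℝ) (Y : Matrix c d ℝ) :
    cpx (X ⊗ₖ Y) = cpx X ⊗ₖ cpx Y := by
  ext ⟨i, j⟩ ⟨i', j'⟩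
  simp [cpx, Matrix.kroneckerMap_apply]

lemma sum_smul_vecMul {ι κ σ : Type*} [Fintype ι] [Fintype σ] (t : Finset σ)
    (c : σ → ℂ) (w : σ → ι → ℂ) (M : Matrix ι κ ℂ) :
    (∑ i ∈ t, c i • w i) ᵥ* M = ∑ i ∈ t, c i • (w i ᵥ* M) := by
  have h1 := map_sum (Matrix.vecMulLinear M) (fun i => c i • w i) t
  rw [Matrix.vecMulLinear_apply] at h1
  rw [h1]
  exact Finset.sum_congr rfl fun i _ => by
    rw [LinearMap.map_smul, Matrix.vecMulLinear_apply]

lemma pbh_big {n m p N : ℕ} (h : ℝ) (hh : 0 < h)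
    (A : Matrix (Fin n) (Fin n) ℝ) (B : Matrix (Fin n) (Fin p) ℝ)
    (C : Matrix (Fin m) (Fin n) ℝ) (H : Matrix (Fin n) (Fin m) ℝ)
    (W : Matrix (Fin N) (Fin N) ℝ)
    (hN2 : 2 ≤ N)
    (hW0 : ∀ i j : Fin N, ¬((j : ℕ) = 0 ∧ 1 ≤ (i : ℕ)) → W i j = 0)
    (hW1 : ∀ i j : Fin N, (j : ℕ) = 0 → 1 ≤ (i : ℕ) → W i j ≠ 0)
    (hlen1 : ∀ θ : ℂ, ¬ ∃ ξ1 ξ2 : Fin n → ℂ, ξ1 ≠ 0 ∧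
      ξ1 ᵥ* (θ • (1 : Matrix (Fin n) (Fin n) ℂ) - cpx (mexp (h • A))) = 0 ∧
      ξ2 ᵥ* (θ • (1 : Matrix (Fin n) (Fin n) ℂ) - cpx (mexp (h • A))) =
        ξ1 ᵥ* cpx (sampH A H C h))
    (hAB : PBH (cpx A) (cpx B))
    (hpath : ¬ ∃ (l1 l2 : ℂ) (k : ℤ), IsEig (cpx A) l1 ∧ IsEig (cpx A) l2 ∧ k ≠ 0 ∧
      l1 - l2 = (2 * (k : ℂ) * (Real.pi : ℂ) / (h : ℂ)) * Complex.I) :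
    PBH (cpx (Phis A H C W h))
      (cpx ((Matrix.diagonal (fun i : Fin N => if (i : ℕ) = 1 then (0 : ℝ) else 1)) ⊗ₖ
        sampB A B h)) := by
  classical
  intro s v hvF hvG
  set Mc : Matrix (Fin n) (Fin n) ℂ := cpx (mexp (h • A)) with hMc
  set Kc : Matrix (Fin n) (Fin n) ℂ := cpx (sampH A H C h) with hKc
  set Bc : Matrix (Fin n) (Fin p) ℂ := cpx (sampB A B h) with hBc
  set vi : Fin N → Fin n → ℂ := fun i x => v (i, x) with hvi
  have hNpos : 0 < N := by omega
  set i0 : Fin N := ⟨0, hNpos⟩ with hi0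
  set i1 : Fin N := ⟨1, by omega⟩ with hi1
  -- the matrix equation
  have hvF' : v ᵥ* cpx (Phis A H C W h) = s • v := vecMul_from_pbhhyp _ s v hvF
  have hFc : cpx (Phis A H C W h)
      = (1 : Matrix (Fin N) (Fin N) ℂ) ⊗ₖ Mc + cpx W ⊗ₖ Kc := by
    rw [Phis, cpx_add, cpx_kron, cpx_kron, cpx_one]
  -- componentwise equation
  have hsum : ∀ (i' : Fin N) (j' : Fin n),
      (vi i' ᵥ* Mc) j' + ∑ i : Fin N, (W i i' : ℂ) * ((vi i ᵥ* Kc) j')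
        = s * vi i' j' := by
    intro i' j'
    have h0 := congrFun hvF' (i', j')
    rw [hFc] at h0
    simp only [Matrix.vecMul, dotProduct, Matrix.add_apply, Matrix.kroneckerMap_apply,
      Fintype.sum_prod_type, Pi.smul_apply, smul_eq_mul] at h0
    rw [← h0]
    have hterm : ∀ i : Fin N,
        (∑ j : Fin n, v (i, j) * ((1 : Matrix (Fin N) (Fin N) ℂ) i i' * Mc j j'
          + (cpx W) i i' * Kc j j'))
        = (if i = i' then (vi i' ᵥ* Mc) j' else 0)
          + (W i i' : ℂ) * ((vi i ᵥ* Kc) j') := by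
      intro i
      rw [Finset.sum_congr rfl (fun j _ => mul_add (v (i,j)) _ _), Finset.sum_add_distrib]
      congr 1
      · by_cases hii : i = i'
        · subst hii
          simp only [Matrix.one_apply_eq, one_mul, if_true]
          simp [Matrix.vecMul, dotProduct, hvi]
        · simp only [Matrix.one_apply_ne hii, zero_mul, mul_zero, Finset.sum_const_zero,
            if_neg hii]
      · have hW : (cpx W) i i' = (W i i' : ℂ) := by simp [cpx]
        rw [hW]
        simp only [Matrix.vecMul, dotProduct, hvi, Finset.mul_sum]
        exact Finset.sum_congr rfl fun x _ => by ring
    rw [Finset.sum_congr rfl (fun i _ => hterm i), Finset.sum_add_distrib,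
      Finset.sum_ite_eq' Finset.univ i']
    simp
  -- vector form
  have hveq : ∀ i' : Fin N,
      (vi i' ᵥ* Mc) + ∑ i : Fin N, (W i i' : ℂ) • (vi i ᵥ* Kc) = s • vi i' := by
    intro i'
    funext j'
    have := hsum i' j'
    simpa [Finset.sum_apply, Pi.smul_apply, smul_eq_mul] using this
  -- blocks away from column 0
  have hMred : ∀ i' : Fin N, (i' : ℕ) ≠ 0 → vi i' ᵥ* Mc = s • vi i' := by
    intro i' hne
    have hzero : ∀ i : Fin N, (W i i' : ℂ) • (vi i ᵥ* Kc) = 0 := by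
      intro i
      rw [hW0 i i' (by intro hc; exact hne hc.1)]
      simp
    have := hveq i'
    rw [Finset.sum_congr rfl (fun i _ => hzero i)] at this
    simpa using this
  -- the ξ vector
  set ξ : Fin n → ℂ := ∑ i : Fin N, (W i i0 : ℂ) • vi i with hξ
  have hW00 : W i0 i0 = 0 := hW0 i0 i0 (by simp [hi0])
  have hξM : ξ ᵥ* Mc = s • ξ := by
    rw [hξ, sum_smul_vecMul]
    rw [Finset.smul_sum]
    refine Finset.sum_congr rfl fun i _ => ?_
    by_cases hii : (i : ℕ) = 0
    · have : i = i0 := by apply Fin.ext; simpa [hi0] using hii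
      subst this
      rw [hW00]
      simp
    · rw [hMred i hii, smul_comm]
  have hv0eq : vi i0 ᵥ* Mc + ξ ᵥ* Kc = s • vi i0 := by
    rw [hξ, sum_smul_vecMul]
    exact hveq i0
  have hξ0 : ξ = 0 := by
    by_contra hξne
    exact hlen1 s ⟨ξ, vi i0, hξne, pbhhyp_of_vecMul _ s ξ hξM, by
      rw [Matrix.vecMul_sub, vecMul_matSmul, Matrix.vecMul_one]
      rw [← hv0eq]
      abel⟩
  have hv0M : vi i0 ᵥ* Mc = s • vi i0 := by
    have := hv0eq
    rw [hξ0] at this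
    simpa using this
  -- input equation
  have hGc : ∀ i' : Fin N, (i' : ℕ) ≠ 1 → vi i' ᵥ* Bc = 0 := by
    intro i' hne1
    funext j'
    have h0 := congrFun hvG (i', j')
    rw [cpx_kron] at h0
    simp only [Matrix.vecMul, dotProduct, Matrix.kroneckerMap_apply,
      Fintype.sum_prod_type, Pi.zero_apply] at h0
    have hterm2 : ∀ i : Fin N,
        (∑ x : Fin n, v (i, x) * (cpx (Matrix.diagonal
          (fun i : Fin N => if (i : ℕ) = 1 then (0 : ℝ) else 1)) i i' * Bc x j'))
        = if i = i' then (vi i' ᵥ* Bc) j' else 0 := by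
      intro i
      by_cases hii : i = i'
      · subst hii
        have hd : cpx (Matrix.diagonal
            (fun i : Fin N => if (i : ℕ) = 1 then (0 : ℝ) else 1)) i i = 1 := by
          simp [cpx, Matrix.diagonal_apply_eq, hne1]
        rw [hd, if_pos rfl]
        simp only [Matrix.vecMul, dotProduct, hvi, one_mul]
      · have hd : cpx (Matrix.diagonal
            (fun i : Fin N => if (i : ℕ) = 1 then (0 : ℝ) else 1)) i i' = 0 := by
          simp [cpx, Matrix.diagonal_apply_ne _ hii]
        rw [hd, if_neg hii]
        simp
    rw [Finset.sum_congr rfl (fun i _ => hterm2 i), Finset.sum_ite_eq' Finset.univ i'] at h0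
    simpa using h0
  -- conclude each block vanishes except possibly block 1
  have hblock : ∀ i : Fin N, (i : ℕ) ≠ 1 → vi i = 0 := by
    intro i hne1
    have hM : vi i ᵥ* Mc = s • vi i := by
      by_cases hzero : (i : ℕ) = 0
      · have : i = i0 := Fin.ext (by simpa [hi0] using hzero)
        rw [this]; exact hv0M
      · exact hMred i hzero
    exact pbh_sampled A B h hh hAB hpath s (vi i)
      (pbhhyp_of_vecMul _ s (vi i) hM) (hGc i hne1)
  -- the ξ identity forces block 1 to vanish as well
  have hξsing : ξ = (W i1 i0 : ℂ) • vi i1 := by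
    rw [hξ]
    rw [Finset.sum_eq_single i1]
    · intro i _ hne
      have hne1 : (i : ℕ) ≠ 1 := fun hc => hne (Fin.ext (by simpa [hi1] using hc))
      rw [hblock i hne1]
      simp
    · intro habs
      exact absurd (Finset.mem_univ i1) habs
  have hv1 : vi i1 = 0 := by
    have hWne : (W i1 i0 : ℂ) ≠ 0 := by
      apply Complex.ofReal_ne_zero.mpr
      exact hW1 i1 i0 (by simp [hi0]) (by simp [hi1])
    rw [hξ0] at hξsing
    rcases smul_eq_zero.mp hξsing.symm with hc | hc
    · exact absurd hc hWne
    · exact hc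
  funext x
  rcases x with ⟨i, j⟩
  by_cases hii : (i : ℕ) = 1
  · have : i = i1 := Fin.ext (by simpa [hi1] using hii)
    rw [this]
    have := congrFun hv1 j
    simpa [hvi] using this
  · have := congrFun (hblock i hii) j
    simpa [hvi] using this

end Aux

theorem stmt10
    (n m p N : ℕ) (hn : 0 < n) (hm : 0 < m) (hp : 0 < p) (hN : 0 < N)
    (h : ℝ) (hh : 0 < h)
    (A : Matrix (Fin n) (Fin n) ℝ) (B : Matrix (Fin n) (Fin p) ℝ)
    (C : Matrix (Fin m) (Fin n) ℝ) (H : Matrix (Fin n) (Fin m) ℝ)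
    (W : Matrix (Fin N) (Fin N) ℝ)
    (hN2 : 2 ≤ N)
    (hW0 : ∀ i j : Fin N, ¬((j : ℕ) = 0 ∧ 1 ≤ (i : ℕ)) → W i j = 0)
    (hW1 : ∀ i j : Fin N, (j : ℕ) = 0 → 1 ≤ (i : ℕ) → W i j ≠ 0)
    (hlen1 : ∀ θ : ℂ, ¬ ∃ ξ1 ξ2 : Fin n → ℂ, ξ1 ≠ 0 ∧
      ξ1 ᵥ* (θ • (1 : Matrix (Fin n) (Fin n) ℂ) - cpx (mexp (h • A))) = 0 ∧
      ξ2 ᵥ* (θ • (1 : Matrix (Fin n) (Fin n) ℂ) - cpx (mexp (h • A))) =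
        ξ1 ᵥ* cpx (sampH A H C h))
    (hAB : PBH (cpx A) (cpx B))
    (hpath : ¬ ∃ (l1 l2 : ℂ) (k : ℤ), IsEig (cpx A) l1 ∧ IsEig (cpx A) l2 ∧ k ≠ 0 ∧
      l1 - l2 = (2 * (k : ℂ) * (Real.pi : ℂ) / (h : ℂ)) * Complex.I) :
    Controllable (Phis A H C W h)
      (Matrix.diagonal (fun i : Fin N => if (i : ℕ) = 1 then (0 : ℝ) else 1) ⊗ₖ
        sampB A B h) := by
  apply controllable_of_cpxPBH
  exact pbh_big h hh A B C H W hN2 hW0 hW1 hlen1 hAB hpath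
end

section
/- Let a, b, c ∈ ℝ with a ≠ 0, b ≠ 0, c ≠ 0 and h > 0, and let Φ_s = e^{ah}·I_N + (c/a)(e^{ah} − 1)·W, Ψ_s = (b/a)(e^{ah} − 1)·Δ. If the pair (W, Δ) satisfies the PBH condition, then the pair (Φ_s, Ψ_s) is controllable. -/
open Matrix
open scoped Kronecker

/-!
The sampled system matrices are `Φ_s = e^{ah} I + β W` and `Ψ_s = γ Δ` with `β, γ ≠ 0`
(since `e^{ah} ≠ 1`), and the PBH condition is invariant under `M ↦ α I + β M`, `G ↦ γ G`.
So it suffices to show that PBH implies controllability. A left eigenvector of `M`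
annihilating `G` would exist in the `M`-invariant space of row vectors killing every `M^i G`,
so PBH makes the reachable subspaces exhaust the state space; being an increasing chain in
finite dimension, one of them is already everything.
-/

section Complexification

variable {m n : Type*}

lemma cpx_eq_map (M : Matrix m n ℝ) : cpx M = M.map Complex.ofRealHom :=
  rfl

lemma cpx_add_s13 (M P : Matrix m n ℝ) : cpx (M + P) = cpx M + cpx P :=
  Matrix.map_add _ Complex.ofReal_add M P

lemma cpx_smul_s13 (r : ℝ) (M : Matrix m n ℝ) : cpx (r • M) = (r : ℂ) • cpx M := by
  ext i j; simp [cpx]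

lemma cpx_one_s13 [Fintype m] [DecidableEq m] : cpx (1 : Matrix m m ℝ) = 1 := by
  rw [cpx_eq_map, Matrix.map_one _ (map_zero _) (map_one _)]

lemma cpx_pow_mul [Fintype m] [DecidableEq m] (F : Matrix m m ℝ) (G : Matrix m n ℝ) (i : ℕ) :
    cpx (F ^ i * G) = cpx F ^ i * cpx G := by
  rw [cpx_eq_map, Matrix.map_mul, ← RingHom.mapMatrix_apply, map_pow]
  rfl

end Complexification

namespace PBH

variable {q r : Type*} [Fintype q] [DecidableEq q] [Fintype r]
  {M : Matrix q q ℂ} {G : Matrix q r ℂ}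

lemma vecMul_smul_one_sub_eq_zero_iff (s : ℂ) (v : q → ℂ) :
    v ᵥ* (s • (1 : Matrix q q ℂ) - M) = 0 ↔ v ᵥ* M = s • v := by
  rw [vecMul_sub, vecMul_smul, vecMul_one, sub_eq_zero, eq_comm]

lemma eq_zero_of_vecMul_eq_smul (hPBH : PBH M G) {s : ℂ} {v : q → ℂ} (hM : v ᵥ* M = s • v)
    (hG : v ᵥ* G = 0) : v = 0 :=
  hPBH s v ((vecMul_smul_one_sub_eq_zero_iff s v).2 hM) hG

lemma smul_one_add_smul (hPBH : PBH M G) (α : ℂ) {β γ : ℂ} (hβ : β ≠ 0) (hγ : γ ≠ 0) :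
    PBH (α • 1 + β • M) (γ • G) := by
  intro s v hM hG
  rw [vecMul_smul_one_sub_eq_zero_iff, vecMul_add, vecMul_smul, vecMul_one, vecMul_smul,
    ← eq_sub_iff_add_eq', ← sub_smul] at hM
  refine hPBH.eq_zero_of_vecMul_eq_smul (s := (s - α) / β) ?_
    ((smul_eq_zero.1 (vecMul_smul v γ G ▸ hG)).resolve_left hγ)
  rw [div_eq_inv_mul, mul_smul, ← hM, smul_smul, inv_mul_cancel₀ hβ, one_smul]

lemma eq_zero_of_vecMul_pow_mul_eq_zero (hPBH : PBH M G) {v : q → ℂ}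
    (hv : ∀ i : ℕ, v ᵥ* (M ^ i * G) = 0) : v = 0 := by
  let U : Submodule ℂ (q → ℂ) := ⨅ i : ℕ, LinearMap.ker (vecMulLinear (M ^ i * G))
  have mem_U : ∀ w, w ∈ U ↔ ∀ i : ℕ, w ᵥ* (M ^ i * G) = 0 := by
    simp [U, Submodule.mem_iInf]
  have hU : U = ⊥ := by
    by_contra hne
    have : Nontrivial U := Submodule.nontrivial_iff_ne_bot.2 hne
    have hinv : ∀ w ∈ U, vecMulLinear M w ∈ U := fun w hw ↦ by
      rw [mem_U] at hw ⊢
      intro i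
      rw [vecMulLinear_apply, vecMul_vecMul, ← Matrix.mul_assoc, ← pow_succ']
      exact hw (i + 1)
    obtain ⟨s, hs⟩ := Module.End.exists_eigenvalue ((vecMulLinear M).restrict hinv)
    obtain ⟨u, hu⟩ := hs.exists_hasEigenvector
    have hM : (u : q → ℂ) ᵥ* M = s • (u : q → ℂ) := by
      simpa [LinearMap.restrict_apply, vecMulLinear_apply] using congrArg Subtype.val
        hu.apply_eq_smul
    have hG : (u : q → ℂ) ᵥ* G = 0 := by simpa using (mem_U u).1 u.2 0
    exact hu.2 (Subtype.ext (hPBH.eq_zero_of_vecMul_eq_smul hM hG))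
  simpa [hU] using (mem_U v).2 hv

lemma eq_zero_of_real_vecMul_pow_mul_eq_zero {F : Matrix q q ℝ} {G : Matrix q r ℝ}
    (hPBH : PBH (cpx F) (cpx G)) {v : q → ℝ} (hv : ∀ i : ℕ, v ᵥ* (F ^ i * G) = 0) : v = 0 := by
  have hvC : (Complex.ofRealHom ∘ v) = 0 := hPBH.eq_zero_of_vecMul_pow_mul_eq_zero fun i ↦ by
    ext j
    rw [← cpx_pow_mul, cpx_eq_map, ← RingHom.map_vecMul, hv i]
    simp
  ext j
  simpa using congrFun hvC j

end PBH

section Reachability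

variable {q r : Type*} [Fintype q] [DecidableEq q] [Fintype r]
  (F : Matrix q q ℝ) (G : Matrix q r ℝ)

noncomputable def reachMap (k : ℕ) : (Fin k → r → ℝ) →ₗ[ℝ] (q → ℝ) :=
  ∑ j : Fin k, (mulVecLin (F ^ (k - 1 - (j : ℕ)) * G)).comp (LinearMap.proj j)

lemma reachMap_apply (k : ℕ) (u : Fin k → r → ℝ) :
    reachMap F G k u = ∑ j : Fin k, (F ^ (k - 1 - (j : ℕ))) *ᵥ (G *ᵥ u j) := by
  simp [reachMap, mulVec_mulVec]

lemma monotone_range_reachMap : Monotone fun k ↦ LinearMap.range (reachMap F G k) := by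
  refine monotone_nat_of_le_succ fun k ↦ ?_
  rintro _ ⟨u, rfl⟩
  refine ⟨Fin.cons 0 u, ?_⟩
  simp only [reachMap_apply, Fin.sum_univ_succ, Fin.cons_zero, Fin.cons_succ, mulVec_zero,
    zero_add, Fin.val_succ]
  refine Finset.sum_congr rfl fun j _ ↦ ?_
  rw [show k + 1 - 1 - (j + 1 : ℕ) = k - 1 - j by omega]

lemma pow_mulVec_mulVec_mem_range_reachMap (i : ℕ) (u : r → ℝ) :
    F ^ i *ᵥ (G *ᵥ u) ∈ LinearMap.range (reachMap F G (i + 1)) :=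
  ⟨Fin.cons u 0, by simp [reachMap_apply, Fin.sum_univ_succ]⟩

lemma iSup_range_reachMap_eq_top (hPBH : PBH (cpx F) (cpx G)) :
    ⨆ k, LinearMap.range (reachMap F G k) = ⊤ := by
  classical
  by_contra hne
  obtain ⟨f, hf, hle⟩ := Submodule.exists_le_ker_of_lt_top _ (lt_top_iff_ne_top.2 hne)
  set v := (dotProductEquiv ℝ q).symm f
  have hfv : ∀ x, f x = v ⬝ᵥ x := fun x ↦ by
    rw [← (dotProductEquiv ℝ q).apply_symm_apply f]; rfl
  have hv : v = 0 := hPBH.eq_zero_of_real_vecMul_pow_mul_eq_zero fun i ↦ by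
    ext j
    have := hle (le_iSup (fun k ↦ LinearMap.range (reachMap F G k)) (i + 1)
      (pow_mulVec_mulVec_mem_range_reachMap F G i (Pi.single j 1)))
    rwa [LinearMap.mem_ker, hfv, mulVec_mulVec, dotProduct_mulVec, dotProduct_single,
      mul_one] at this
  exact hf (LinearMap.ext fun x ↦ by simp [hfv, hv])

lemma exists_range_reachMap_eq_top (hPBH : PBH (cpx F) (cpx G)) :
    ∃ k, LinearMap.range (reachMap F G k) = ⊤ := by
  let R : ℕ →o Submodule ℝ (q → ℝ) := ⟨_, monotone_range_reachMap F G⟩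
  exact ⟨_, (WellFoundedGT.iSup_eq_monotonicSequenceLimit R).symm.trans
    (iSup_range_reachMap_eq_top F G hPBH)⟩

lemma controllable_of_pbh_cpx (hPBH : PBH (cpx F) (cpx G)) : Controllable F G := by
  obtain ⟨k, hk⟩ := exists_range_reachMap_eq_top F G hPBH
  intro x
  obtain ⟨u, hu⟩ : -(F ^ k *ᵥ x) ∈ LinearMap.range (reachMap F G k) := hk ▸ Submodule.mem_top
  exact ⟨k, u, by rw [← reachMap_apply, hu, add_neg_cancel]⟩

end Reachability

theorem stmt13_general
    (N : ℕ) (h a b c : ℝ) (hh : 0 < h) (ha : a ≠ 0)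
    (W : Matrix (Fin N) (Fin N) ℝ)
    (δ : Fin N → ℝ)
    (hb : b ≠ 0) (hc : c ≠ 0)
    (hPBH : PBH (cpx W) (cpx (Matrix.diagonal δ))) :
    Controllable
      (Real.exp (a * h) • (1 : Matrix (Fin N) (Fin N) ℝ) +
        ((c / a) * (Real.exp (a * h) - 1)) • W)
      (((b / a) * (Real.exp (a * h) - 1)) • Matrix.diagonal δ) := by
  have he : Real.exp (a * h) - 1 ≠ 0 :=
    sub_ne_zero.2 fun h1 ↦ mul_ne_zero ha hh.ne' (Real.exp_eq_one_iff _ |>.1 h1)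
  apply controllable_of_pbh_cpx
  rw [cpx_add_s13, cpx_smul_s13, cpx_smul_s13, cpx_smul_s13, cpx_one_s13]
  exact hPBH.smul_one_add_smul _
    (Complex.ofReal_ne_zero.2 (mul_ne_zero (div_ne_zero hc ha) he))
    (Complex.ofReal_ne_zero.2 (mul_ne_zero (div_ne_zero hb ha) he))

theorem stmt13
    (N : ℕ) (hN : 0 < N) (h a b c : ℝ) (hh : 0 < h) (ha : a ≠ 0)
    (W : Matrix (Fin N) (Fin N) ℝ)
    (δ : Fin N → ℝ) (hδ : ∀ i, δ i = 0 ∨ δ i = 1)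
    (hb : b ≠ 0) (hc : c ≠ 0)
    (hPBH : PBH (cpx W) (cpx (Matrix.diagonal δ))) :
    Controllable
      (Real.exp (a * h) • (1 : Matrix (Fin N) (Fin N) ℝ) +
        ((c / a) * (Real.exp (a * h) - 1)) • W)
      (((b / a) * (Real.exp (a * h) - 1)) • Matrix.diagonal δ) :=
  stmt13_general N h a b c hh ha W δ hb hc hPBH
end
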